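/- Let Γ be a cancellation monoid with neutral element e and A a Γ-graded local ring. Let M be a left A-module possessing an infinite minimal generating set T (i.e. T generates M and no proper subset of T generates M). Then any other minimal generating set T′ of M has the same cardinality as T. -/
import Mathlib

open Cardinal

/-- Every element of a generating set lies in the span of a finite subset of any other
generating set; choose such a finite subset for each element. -/
lemma aux_exists_finsets {A : Type*} [Ring A] {M : Type*} [AddCommGroup M] [Module A M]
    (T T' : Set M) (hT'gen : Submodule.span A T' = ⊤) :
    ∀ t : T, ∃ F : Finset M, ↑F ⊆ T' ∧ (t : M) ∈ Submodule.span A (F : Set M) := by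
  intro t
  have h : (t : M) ∈ Submodule.span A T' := by rw [hT'gen]; trivial
  exact Submodule.mem_span_finite_of_mem_span h

/-- If `T` is an infinite generating set and `T'` is a minimal generating set,
then `#T' ≤ #T`. -/
lemma aux_card_le {A : Type*} [Ring A] {M : Type*} [AddCommGroup M] [Module A M]
    (T T' : Set M) (hT : T.Infinite)
    (hTgen : Submodule.span A T = ⊤)
    (hT'gen : Submodule.span A T' = ⊤)
    (hT'min : ∀ S ⊂ T', Submodule.span A S ≠ ⊤) :
    Cardinal.mk T' ≤ Cardinal.mk T := by
  choose f hf1 hf2 using aux_exists_finsets T T' hT'gen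
  set U : Set M := ⋃ t : T, (f t : Set M) with hU
  have hUsub : U ⊆ T' := Set.iUnion_subset fun t => hf1 t
  have hUspan : Submodule.span A U = ⊤ := by
    rw [eq_top_iff, ← hTgen, Submodule.span_le]
    intro x hx
    exact Submodule.span_mono (Set.subset_iUnion (fun t : T => (f t : Set M)) ⟨x, hx⟩)
      (hf2 ⟨x, hx⟩)
  have hUeq : U = T' := by
    by_contra hne
    exact hT'min U ⟨hUsub, fun h => hne (le_antisymm hUsub h)⟩ hUspan
  have hTinf : Infinite T := hT.to_subtype
  calc Cardinal.mk T' = Cardinal.mk U := by rw [hUeq]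
    _ ≤ Cardinal.mk T * ⨆ t : T, Cardinal.mk (f t : Set M) := Cardinal.mk_iUnion_le _
    _ ≤ Cardinal.mk T * ℵ₀ := by
        apply mul_le_mul_right
        exact ciSup_le fun t => (lt_aleph0_of_finite _).le
    _ = Cardinal.mk T := mul_aleph0_eq (aleph0_le_mk T)

/-- **Theorem 3.2.**  Let `Γ` be a cancellation monoid (written additively) and `A` a
`Γ`-graded local ring (i.e. the degree-`0` part `A_0` is a local ring in the classical
sense).  Let `M` be a left `A`-module possessing an infinite minimal generating set `T`.
Then any other minimal generating set `T'` of `M` has the same cardinality as `T`. -/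
theorem infinite_minimal_generating_sets_equicardinal
    {Γ : Type*} [AddCancelMonoid Γ] [DecidableEq Γ]
    {A : Type*} [Ring A] (𝒜 : Γ → AddSubgroup A) [GradedRing 𝒜]
    [IsLocalRing (𝒜 0)]
    {M : Type*} [AddCommGroup M] [Module A M]
    (T T' : Set M)
    (hT : T.Infinite)
    (hTgen : Submodule.span A T = ⊤)
    (hTmin : ∀ S ⊂ T, Submodule.span A S ≠ ⊤)
    (hT'gen : Submodule.span A T' = ⊤)
    (hT'min : ∀ S ⊂ T', Submodule.span A S ≠ ⊤) :
    Cardinal.mk T' = Cardinal.mk T := by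
  have hT'inf : T'.Infinite := by
    by_contra hinf
    rw [Set.not_infinite] at hinf
    have hfin := hinf
    haveI := hfin.to_subtype
    choose g hg1 hg2 using aux_exists_finsets T' T hTgen
    set V : Set M := ⋃ t : T', (g t : Set M) with hV
    have hVfin : V.Finite := Set.finite_iUnion fun t => (g t).finite_toSet
    have hVsub : V ⊆ T := Set.iUnion_subset fun t => hg1 t
    have hVspan : Submodule.span A V = ⊤ := by
      rw [eq_top_iff, ← hT'gen, Submodule.span_le]
      intro x hx
      exact Submodule.span_mono (Set.subset_iUnion (fun t : T' => (g t : Set M)) ⟨x, hx⟩)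
        (hg2 ⟨x, hx⟩)
    have hVne : V ≠ T := fun h => hT (h ▸ hVfin)
    exact hTmin V ⟨hVsub, fun h => hVne (le_antisymm hVsub h)⟩ hVspan
  exact le_antisymm (aux_card_le T T' hT hTgen hT'gen hT'min)
    (aux_card_le T' T hT'inf hT'gen hTgen hTmin)
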